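/- arXiv:1703.05413 — 3 statements merged into one kernel-verified Lean document; each statement's English description precedes it below -/
import Mathlib

section
/- For formal power series over a commutative ring, if A(x) = x·R(A(x)) with R(0) invertible, then for any formal power series F, the coefficient of x^n in F(A(x)) equals (1/n) times the coefficient of t^{n-1} in F'(t)·R(t)^n, for all n ≥ 1. -/
open PowerSeries Finset

/-- Composition `F(A)` of formal power series, valid when `A` has zero constant term. -/
noncomputable def psComp (F A : PowerSeries ℚ) : PowerSeries ℚ :=
  PowerSeries.mk fun n => ∑ k ∈ Finset.range (n + 1),
    (PowerSeries.coeff k F) * PowerSeries.coeff n (A ^ k)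

namespace LagrangeAux

lemma coeff_comp (F A : PowerSeries ℚ) (n : ℕ) :
    PowerSeries.coeff n (psComp F A) =
      ∑ k ∈ range (n + 1), PowerSeries.coeff k F * PowerSeries.coeff n (A ^ k) := by
  simp [psComp, coeff_mk]

lemma coeff_pow_eq_zero {A : PowerSeries ℚ} (hA0 : constantCoeff A = 0)
    {m i : ℕ} (h : m < i) : PowerSeries.coeff m (A ^ i) = 0 :=
  X_pow_dvd_iff.mp (pow_dvd_pow_of_dvd (X_dvd_iff.mpr hA0) i) m h

lemma coeff_aeval {A : PowerSeries ℚ} (hA0 : constantCoeff A = 0)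
    (p : Polynomial ℚ) (n : ℕ) :
    PowerSeries.coeff n (Polynomial.aeval A p) =
      ∑ k ∈ range (n + 1), p.coeff k * PowerSeries.coeff n (A ^ k) := by
  rw [Polynomial.aeval_eq_sum_range'
      (lt_of_lt_of_le (Nat.lt_succ_self _) (le_max_left (p.natDegree + 1) (n + 1))) A,
    map_sum]
  simp_rw [LinearMap.map_smul, smul_eq_mul]
  refine (Finset.sum_subset (Finset.range_subset_range.mpr (le_max_right _ _)) ?_).symm
  intro k _ hk
  rw [Finset.mem_range, not_lt] at hk
  rw [coeff_pow_eq_zero hA0 (by omega), mul_zero]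

lemma coeff_comp_eq_aeval {A : PowerSeries ℚ} (hA0 : constantCoeff A = 0)
    (F : PowerSeries ℚ) {a n : ℕ} (h : a ≤ n) :
    PowerSeries.coeff a (psComp F A) =
      PowerSeries.coeff a (Polynomial.aeval A (trunc (n + 1) F)) := by
  rw [coeff_comp, coeff_aeval hA0]
  refine Finset.sum_congr rfl fun k hk => ?_
  rw [Finset.mem_range] at hk
  rw [coeff_trunc, if_pos (show k < n + 1 by omega)]

lemma comp_mul {A : PowerSeries ℚ} (hA0 : constantCoeff A = 0) (P Q : PowerSeries ℚ) :
    psComp (P * Q) A = psComp P A * psComp Q A := by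
  ext n
  rw [PowerSeries.coeff_mul]
  have h1 : ∀ pq ∈ antidiagonal n,
      PowerSeries.coeff pq.1 (psComp P A) * PowerSeries.coeff pq.2 (psComp Q A) =
      PowerSeries.coeff pq.1 (Polynomial.aeval A (trunc (n + 1) P)) *
        PowerSeries.coeff pq.2 (Polynomial.aeval A (trunc (n + 1) Q)) := by
    intro pq hpq
    rw [Finset.HasAntidiagonal.mem_antidiagonal] at hpq
    rw [coeff_comp_eq_aeval hA0 P (by omega : pq.1 ≤ n),
      coeff_comp_eq_aeval hA0 Q (by omega : pq.2 ≤ n)]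
  rw [Finset.sum_congr rfl h1, ← PowerSeries.coeff_mul, ← map_mul,
    coeff_comp_eq_aeval hA0 (P * Q) (le_refl n), coeff_aeval hA0, coeff_aeval hA0]
  refine Finset.sum_congr rfl fun k hk => ?_
  rw [Finset.mem_range] at hk
  congr 1
  rw [coeff_trunc, if_pos (show k < n + 1 by omega),
    coeff_mul_eq_coeff_trunc_mul_trunc (n := n + 1) P Q (show k < n + 1 by omega),
    ← Polynomial.coe_mul, Polynomial.coeff_coe]

lemma comp_one (A : PowerSeries ℚ) : psComp 1 A = 1 := by
  ext n
  rw [coeff_comp]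
  simp_rw [coeff_one, ite_mul, one_mul, zero_mul]
  rw [Finset.sum_ite_eq' (range (n + 1)) 0 (fun k => PowerSeries.coeff n (A ^ k)),
    if_pos (Finset.mem_range.mpr (Nat.succ_pos n))]
  rw [pow_zero, PowerSeries.coeff_one]

lemma comp_pow {A : PowerSeries ℚ} (hA0 : constantCoeff A = 0) (R : PowerSeries ℚ) (j : ℕ) :
    psComp (R ^ j) A = (psComp R A) ^ j := by
  induction j with
  | zero => simpa using comp_one A
  | succ j ih => rw [pow_succ, comp_mul hA0, ih, pow_succ]

lemma constantCoeff_comp (F A : PowerSeries ℚ) :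
    constantCoeff (psComp F A) = constantCoeff F := by
  rw [← coeff_zero_eq_constantCoeff_apply, coeff_comp]
  simp

lemma comp_sub_sum_dvd {A : PowerSeries ℚ} (hA0 : constantCoeff A = 0)
    (G : PowerSeries ℚ) (N : ℕ) :
    (X : PowerSeries ℚ) ^ N ∣
      psComp G A - ∑ i ∈ range N, PowerSeries.C (PowerSeries.coeff i G) * A ^ i := by
  rw [X_pow_dvd_iff]
  intro m hm
  rw [map_sub, coeff_comp, map_sum]
  simp_rw [coeff_C_mul]
  rw [sub_eq_zero]
  refine Finset.sum_subset (Finset.range_subset_range.mpr hm) fun k _ hk => ?_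
  rw [Finset.mem_range, not_lt] at hk
  rw [coeff_pow_eq_zero hA0 (by omega), mul_zero]

lemma coeff_inv_pow_mul_deriv {u : PowerSeries ℚ} (hu : constantCoeff u ≠ 0)
    {A : PowerSeries ℚ} (hA : A = X * u) (s : ℕ) :
    PowerSeries.coeff s (u⁻¹ ^ (s + 1) * PowerSeries.derivative ℚ A) =
      if s = 0 then 1 else 0 := by
  have hwu : u⁻¹ * u = 1 := PowerSeries.inv_mul_cancel u hu
  have hu1 : u * u⁻¹ = 1 := by rw [mul_comm]; exact hwu
  have hdA : PowerSeries.derivative ℚ A = u + X * PowerSeries.derivative ℚ u := by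
    rw [hA, Derivation.leibniz, derivative_X, smul_eq_mul, smul_eq_mul, mul_one, add_comm]
  cases s with
  | zero =>
    rw [if_pos rfl, zero_add, pow_one, coeff_zero_eq_constantCoeff_apply, map_mul,
      PowerSeries.constantCoeff_inv]
    have : constantCoeff (PowerSeries.derivative ℚ A) = constantCoeff u := by
      rw [hdA, map_add, map_mul, constantCoeff_X, zero_mul, add_zero]
    rw [this, inv_mul_cancel₀ hu]
  | succ t =>
    rw [if_neg (Nat.succ_ne_zero t)]
    set w := u⁻¹ with hw
    have h0 : w * PowerSeries.derivative ℚ u + u * PowerSeries.derivative ℚ w = 0 := by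
      have h := congrArg (PowerSeries.derivative ℚ) hwu
      rw [Derivation.leibniz, smul_eq_mul, smul_eq_mul, Derivation.map_one_eq_zero] at h
      exact h
    have hdw2 : u ^ 2 * PowerSeries.derivative ℚ w = -PowerSeries.derivative ℚ u := by
      linear_combination u * h0 - PowerSeries.derivative ℚ u * hu1
    have hC : w ^ (t + 2) * PowerSeries.derivative ℚ A =
        w ^ (t + 1) - X * (w ^ t * PowerSeries.derivative ℚ w) := by
      have hcan : IsUnit (u ^ (t + 2)) := (IsUnit.of_mul_eq_one (a := u) w hu1).pow _
      apply hcan.mul_left_cancel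
      calc u ^ (t + 2) * (w ^ (t + 2) * PowerSeries.derivative ℚ A)
          = (u * w) ^ (t + 2) * PowerSeries.derivative ℚ A := by ring
        _ = PowerSeries.derivative ℚ A := by rw [hu1, one_pow, one_mul]
        _ = u + X * PowerSeries.derivative ℚ u := hdA
        _ = u * (u * w) ^ (t + 1) -
            X * ((u * w) ^ t * (u ^ 2 * PowerSeries.derivative ℚ w)) := by
          rw [hu1, one_pow, one_pow, hdw2]; ring
        _ = u ^ (t + 2) * (w ^ (t + 1) - X * (w ^ t * PowerSeries.derivative ℚ w)) := by
          ring
    have hds : PowerSeries.derivative ℚ (w ^ (t + 1)) =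
        (t + 1) • (w ^ t * PowerSeries.derivative ℚ w) := by
      have h := Derivation.leibniz_pow (PowerSeries.derivative ℚ) w (t + 1)
      rw [Nat.add_sub_cancel, smul_eq_mul] at h
      exact h
    have h2 : PowerSeries.coeff (t + 1) (w ^ (t + 1)) =
        PowerSeries.coeff t (w ^ t * PowerSeries.derivative ℚ w) := by
      have h3 := congrArg (PowerSeries.coeff t) hds
      rw [coeff_derivative, map_nsmul, nsmul_eq_mul] at h3
      have hne : ((t : ℚ) + 1) ≠ 0 := by positivity
      push_cast at h3
      apply mul_left_cancel₀ hne
      linear_combination h3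
    rw [hC, map_sub, coeff_succ_X_mul, h2, sub_self]

lemma term_coeff {u : PowerSeries ℚ} (hu : constantCoeff u ≠ 0)
    {A : PowerSeries ℚ} (hA : A = X * u) {i a : ℕ} (h : i ≤ a) :
    PowerSeries.coeff a (u⁻¹ ^ (a + 1) * (A ^ i * PowerSeries.derivative ℚ A)) =
      if i = a then 1 else 0 := by
  obtain ⟨b, rfl⟩ : ∃ b, a = i + b := ⟨a - i, (Nat.add_sub_cancel' h).symm⟩
  have hwu : u⁻¹ * u = 1 := PowerSeries.inv_mul_cancel u hu
  have hAi : A ^ i = X ^ i * u ^ i := by rw [hA, mul_pow]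
  have key : u⁻¹ ^ (i + b + 1) * (A ^ i * PowerSeries.derivative ℚ A) =
      X ^ i * (u⁻¹ ^ (b + 1) * PowerSeries.derivative ℚ A) := by
    rw [hAi]
    calc u⁻¹ ^ (i + b + 1) * (X ^ i * u ^ i * PowerSeries.derivative ℚ A)
        = X ^ i * ((u⁻¹ * u) ^ i * (u⁻¹ ^ (b + 1) * PowerSeries.derivative ℚ A)) := by
          ring
      _ = X ^ i * (u⁻¹ ^ (b + 1) * PowerSeries.derivative ℚ A) := by
          rw [hwu, one_pow, one_mul]
  rw [key, show i + b = b + i from add_comm i b, coeff_X_pow_mul,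
    coeff_inv_pow_mul_deriv hu hA b]
  by_cases hb : b = 0
  · rw [if_pos hb, if_pos (show i = b + i by omega)]
  · rw [if_neg hb, if_neg (show ¬ i = b + i by omega)]

lemma key_lemma (A R : PowerSeries ℚ) (hA0 : constantCoeff A = 0)
    (hR : constantCoeff R ≠ 0) (hA : A = X * psComp R A) (j a : ℕ) :
    ((j + a + 1 : ℕ) : ℚ) * PowerSeries.coeff (j + a + 1) (A ^ (j + 1)) =
      ((j + 1 : ℕ) : ℚ) * PowerSeries.coeff a (R ^ (j + a + 1)) := by
  set u := psComp R A with hu_def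
  have hu : constantCoeff u ≠ 0 := by
    rw [hu_def, constantCoeff_comp]; exact hR
  have hwu : u⁻¹ * u = 1 := PowerSeries.inv_mul_cancel u hu
  set dA := PowerSeries.derivative ℚ A with hdA_def
  -- step 1 : derivative of power
  have h1 : PowerSeries.coeff (j + a) (PowerSeries.derivative ℚ (A ^ (j + 1))) =
      PowerSeries.coeff (j + a + 1) (A ^ (j + 1)) * ((j + a + 1 : ℕ) : ℚ) := by
    rw [coeff_derivative]; push_cast; ring
  have h2 : PowerSeries.derivative ℚ (A ^ (j + 1)) = (j + 1) • (A ^ j * dA) := by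
    have h := Derivation.leibniz_pow (PowerSeries.derivative ℚ) A (j + 1)
    rw [Nat.add_sub_cancel, smul_eq_mul] at h
    exact h
  have h3 : PowerSeries.coeff (j + a) (PowerSeries.derivative ℚ (A ^ (j + 1))) =
      ((j + 1 : ℕ) : ℚ) * PowerSeries.coeff (j + a) (A ^ j * dA) := by
    rw [h2, map_nsmul, nsmul_eq_mul]
  -- step 2 : strip X^j
  have hAj : A ^ j = X ^ j * u ^ j := by rw [hA, mul_pow]
  have h4 : PowerSeries.coeff (j + a) (A ^ j * dA) =
      PowerSeries.coeff a (u ^ j * dA) := by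
    rw [hAj, mul_assoc, show j + a = a + j from add_comm j a, coeff_X_pow_mul]
  -- step 3 : the composition / residue computation
  set n := j + a + 1 with hn_def
  set S := ∑ i ∈ range (a + 1), PowerSeries.C (PowerSeries.coeff i (R ^ n)) * A ^ i
    with hS_def
  have hcomp : psComp (R ^ n) A = u ^ n := comp_pow hA0 R n
  have hsplit : u ^ j = u⁻¹ ^ (a + 1) * u ^ n := by
    have hpow : u ^ n = u ^ (a + 1) * u ^ j := by
      rw [← pow_add]; congr 1; omega
    calc u ^ j = (u⁻¹ * u) ^ (a + 1) * u ^ j := by rw [hwu, one_pow, one_mul]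
      _ = u⁻¹ ^ (a + 1) * u ^ n := by rw [hpow]; ring
  have h5 : PowerSeries.coeff a (u ^ j * dA) =
      PowerSeries.coeff a (u⁻¹ ^ (a + 1) * (psComp (R ^ n) A * dA)) := by
    rw [hcomp, hsplit]; ring_nf
  have h6 : PowerSeries.coeff a (u⁻¹ ^ (a + 1) * (psComp (R ^ n) A * dA)) =
      PowerSeries.coeff a (u⁻¹ ^ (a + 1) * (S * dA)) := by
    have hdvd := comp_sub_sum_dvd hA0 (R ^ n) (a + 1)
    have hd2 : (X : PowerSeries ℚ) ^ (a + 1) ∣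
        (u⁻¹ ^ (a + 1) * (psComp (R ^ n) A * dA) - u⁻¹ ^ (a + 1) * (S * dA)) := by
      have heq : u⁻¹ ^ (a + 1) * (psComp (R ^ n) A * dA) - u⁻¹ ^ (a + 1) * (S * dA) =
          (psComp (R ^ n) A - S) * (u⁻¹ ^ (a + 1) * dA) := by ring
      rw [heq]
      exact hdvd.mul_right _
    have hz := X_pow_dvd_iff.mp hd2 a (Nat.lt_succ_self a)
    rw [map_sub] at hz
    linarith [hz]
  have h7 : PowerSeries.coeff a (u⁻¹ ^ (a + 1) * (S * dA)) =
      PowerSeries.coeff a (R ^ n) := by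
    have hexp : u⁻¹ ^ (a + 1) * (S * dA) =
        ∑ i ∈ range (a + 1), PowerSeries.C (PowerSeries.coeff i (R ^ n)) *
          (u⁻¹ ^ (a + 1) * (A ^ i * dA)) := by
      rw [hS_def, Finset.sum_mul, Finset.mul_sum]
      refine Finset.sum_congr rfl fun i _ => ?_
      ring
    rw [hexp, map_sum]
    have hterm : ∀ i ∈ range (a + 1),
        PowerSeries.coeff a (PowerSeries.C (PowerSeries.coeff i (R ^ n)) *
          (u⁻¹ ^ (a + 1) * (A ^ i * dA))) =
        if i = a then PowerSeries.coeff i (R ^ n) else 0 := by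
      intro i hi
      rw [Finset.mem_range] at hi
      rw [coeff_C_mul, hdA_def, term_coeff hu hA (by omega : i ≤ a)]
      by_cases h : i = a
      · rw [if_pos h, if_pos h, mul_one]
      · rw [if_neg h, if_neg h, mul_zero]
    rw [Finset.sum_congr rfl hterm,
      Finset.sum_ite_eq' (range (a + 1)) a (fun i => PowerSeries.coeff i (R ^ n)),
      if_pos (Finset.mem_range.mpr (Nat.lt_succ_self a))]
  calc ((j + a + 1 : ℕ) : ℚ) * PowerSeries.coeff (j + a + 1) (A ^ (j + 1))
      = PowerSeries.coeff (j + a) (PowerSeries.derivative ℚ (A ^ (j + 1))) := by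
        rw [h1]; ring
    _ = ((j + 1 : ℕ) : ℚ) * PowerSeries.coeff (j + a) (A ^ j * dA) := h3
    _ = ((j + 1 : ℕ) : ℚ) * PowerSeries.coeff a (R ^ n) := by
        rw [h4, h5, h6, h7]

end LagrangeAux

/-- Lagrange inversion: if `A = X * R(A)` with `R(0)` invertible, then for `n ≥ 1`,
`[xⁿ] F(A(x)) = (1/n) [tⁿ⁻¹] (F'(t) R(t)ⁿ)`. -/
theorem lagrange_inversion (A R F : PowerSeries ℚ)
    (hA0 : PowerSeries.constantCoeff A = 0)
    (hR : IsUnit (PowerSeries.constantCoeff R))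
    (hA : A = PowerSeries.X * psComp R A) :
    ∀ n : ℕ, 1 ≤ n →
      PowerSeries.coeff n (psComp F A) =
        (n : ℚ)⁻¹ * PowerSeries.coeff (n - 1)
          ((PowerSeries.derivative ℚ F) * R ^ n) := by
  intro n hn
  obtain ⟨m, rfl⟩ : ∃ m, n = m + 1 := ⟨n - 1, by omega⟩
  have hRc : PowerSeries.constantCoeff R ≠ 0 := hR.ne_zero
  rw [LagrangeAux.coeff_comp, Nat.add_sub_cancel, PowerSeries.coeff_mul,
    Finset.Nat.sum_antidiagonal_eq_sum_range_succ_mk, Finset.sum_range_succ']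
  have hzero : PowerSeries.coeff 0 F * PowerSeries.coeff (m + 1) (A ^ 0) = 0 := by
    rw [pow_zero, PowerSeries.coeff_one, if_neg (Nat.succ_ne_zero m), mul_zero]
  rw [hzero, add_zero, Finset.mul_sum]
  refine Finset.sum_congr rfl fun i hi => ?_
  rw [Finset.mem_range] at hi
  obtain ⟨b, hb⟩ : ∃ b, m = i + b := ⟨m - i, by omega⟩
  subst hb
  have hk := LagrangeAux.key_lemma A R hA0 hRc hA i b
  rw [show i + b - i = b from Nat.add_sub_cancel_left i b, PowerSeries.coeff_derivative]
  have hne : ((i + b + 1 : ℕ) : ℚ) ≠ 0 := by positivity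
  rw [eq_inv_mul_iff_mul_eq₀ hne]
  push_cast at hk ⊢
  linear_combination PowerSeries.coeff (i + 1) F * hk
end

section
/- Let u(k) = C·e^{-λk} for k ≥ 0 with λ > 0 and C = 1 - e^{-λ} (so that Σ_k u(k) = 1). Then for n ≥ 2 the component size distribution w(n) = (μ₁/(n-1))·u₁^{*n}(n-2) equals (1-e^{-λ})^{2n-1}·e^{-λ(n-1)}·Γ(3n-2)/(Γ(n)·Γ(2n)). -/
open Real

/-- Convolution of sequences on ℕ. -/
def conv (f g : ℕ → ℝ) : ℕ → ℝ := fun m => ∑ i ∈ Finset.range (m + 1), f i * g (m - i)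

/-- `n`-fold convolution power; `convPow f 0` is the convolution identity `δ_{k,0}`. -/
def convPow (f : ℕ → ℝ) : ℕ → ℕ → ℝ
  | 0 => fun k => if k = 0 then 1 else 0
  | n + 1 => conv (convPow f n) f

lemma hockey (a M : ℕ) : ∑ i ∈ Finset.range (M+1), (i+a).choose i = (M+a+1).choose M := by
  induction M with
  | zero => simp
  | succ M ih =>
    rw [Finset.sum_range_succ, ih, show M+1+a = M+a+1 from by ring]
    exact (Nat.choose_succ_succ (M+a+1) M).symm

lemma key_id (a m : ℕ) :
    ∑ i ∈ Finset.range (m+1), (i+a).choose i * (m - i + 1) = (m+a+2).choose m := by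
  induction m with
  | zero => simp
  | succ m ih =>
    rw [Finset.sum_range_succ]
    have h1 : ∑ i ∈ Finset.range (m+1), (i+a).choose i * (m + 1 - i + 1)
        = (∑ i ∈ Finset.range (m+1), (i+a).choose i * (m - i + 1))
          + ∑ i ∈ Finset.range (m+1), (i+a).choose i := by
      rw [← Finset.sum_add_distrib]
      refine Finset.sum_congr rfl fun i hi => ?_
      have : i ≤ m := by simpa [Nat.lt_succ_iff] using hi
      have : m + 1 - i + 1 = (m - i + 1) + 1 := by omega
      rw [this, Nat.mul_add, Nat.mul_one]
    rw [h1, ih, hockey]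
    have : m + 1 - (m+1) + 1 = 1 := by omega
    rw [this, Nat.mul_one]
    have hp : (m+a+3).choose (m+1) = (m+a+2).choose m + (m+a+2).choose (m+1) := by
      simpa using Nat.choose_succ_succ (m+a+2) m
    have hp2 : (m+a+2).choose (m+1) = (m+a+1).choose m + (m+a+1).choose (m+1) := by
      simpa using Nat.choose_succ_succ (m+a+1) m
    have h3 : m+1+a+2 = m+a+3 := by ring
    have h4 : m+1+a = m+a+1 := by ring
    rw [h3, h4, hp, hp2]
    ring

lemma convPow_formula (x : ℝ) (u₁ : ℕ → ℝ)
    (h : ∀ k, u₁ k = ((k:ℝ)+1) * (1-x)^2 * x^k) :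
    ∀ j m, convPow u₁ (j+1) m = (1-x)^(2*j+2) * x^m * ((m + 2*j + 1).choose m) := by
  intro j
  induction j with
  | zero =>
    intro m
    have h0 : convPow u₁ 1 m = u₁ m := by
      simp only [convPow, conv]
      rw [Finset.sum_eq_single 0]
      · simp
      · intro i _ hi; simp [hi]
      · intro hm; simp at hm
    rw [h0, h, Nat.choose_succ_self_right]
    push_cast
    ring
  | succ j ih =>
    intro m
    show conv (convPow u₁ (j+1)) u₁ m = _
    unfold conv
    have hstep : ∀ i ∈ Finset.range (m+1),
        convPow u₁ (j+1) i * u₁ (m - i) =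
        (1-x)^(2*(j+1)+2) * x^m * (((i + 2*j + 1).choose i * (m - i + 1) : ℕ) : ℝ) := by
      intro i hi
      have him : i ≤ m := by simpa [Nat.lt_succ_iff] using hi
      rw [ih i, h (m - i)]
      have hx : x^i * x^(m-i) = x^m := by
        rw [← pow_add]
        congr 1
        omega
      push_cast
      rw [← hx]
      ring
    rw [Finset.sum_congr rfl hstep, ← Finset.mul_sum, ← Nat.cast_sum]
    congr 1
    have hks := key_id (2*j+1) m
    simp only [← Nat.add_assoc] at hks
    rw [show m + 2*(j+1) + 1 = m + 2*j + 1 + 2 by omega]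
    exact_mod_cast hks

/-- Component size distribution for the exponential degree distribution
`u(k) = (1-e^{-λ})e^{-λk}`. -/
theorem component_size_exponential (lam : ℝ) (hlam : 0 < lam)
    (u : ℕ → ℝ) (hu : ∀ k, u k = (1 - exp (-lam)) * exp (-lam * k))
    (μ₁ : ℝ) (hμ₁ : HasSum (fun k : ℕ => (k : ℝ) * u k) μ₁)
    (u₁ : ℕ → ℝ) (hu₁ : ∀ k, u₁ k = ((k : ℝ) + 1) * u (k + 1) / μ₁) :
    ∀ n : ℕ, 2 ≤ n →
      μ₁ / ((n : ℝ) - 1) * convPow u₁ n (n - 2) =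
        (1 - exp (-lam)) ^ (2 * n - 1) * exp (-lam * ((n : ℝ) - 1)) *
          Gamma (3 * n - 2) / (Gamma n * Gamma (2 * n)) := by
  set x := exp (-lam) with hxdef
  have hx0 : 0 < x := exp_pos _
  have hx1 : x < 1 := by
    rw [hxdef, exp_lt_one_iff]; linarith
  have hx1' : (0:ℝ) < 1 - x := by linarith
  have hux : ∀ k : ℕ, u k = (1 - x) * x ^ k := by
    intro k
    rw [hu k, hxdef, ← Real.exp_nat_mul]
    ring_nf
  have hsum : HasSum (fun k : ℕ => (k : ℝ) * u k) (x / (1 - x)) := by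
    have h1 : HasSum (fun k : ℕ => (k : ℝ) * x ^ k) (x / (1 - x)^2) :=
      hasSum_coe_mul_geometric_of_norm_lt_one (𝕜 := ℝ) (r := x)
        (by rw [Real.norm_eq_abs, abs_of_pos hx0]; exact hx1)
    have h2 := h1.mul_left (1 - x)
    have heq : (fun k : ℕ => (1 - x) * ((k:ℝ) * x ^ k)) = fun k : ℕ => (k:ℝ) * u k := by
      funext k; rw [hux k]; ring
    rw [heq] at h2
    rw [show x / (1 - x) = (1 - x) * (x / (1 - x) ^ 2) by
      rw [mul_div_assoc', pow_two, mul_div_mul_left _ _ hx1'.ne']]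
    exact h2
  have hμ : μ₁ = x / (1 - x) := hμ₁.unique hsum
  have hu₁x : ∀ k, u₁ k = ((k:ℝ)+1) * (1-x)^2 * x^k := by
    intro k
    rw [hu₁ k, hux (k+1), hμ]
    have hxne : x ≠ 0 := ne_of_gt hx0
    have h1xne : (1:ℝ) - x ≠ 0 := ne_of_gt hx1'
    field_simp
    ring
  intro n hn
  obtain ⟨k, rfl⟩ : ∃ k, n = k + 2 := ⟨n - 2, by omega⟩
  have hconv : convPow u₁ (k+2) k = (1-x)^(2*k+4) * x^k * ((3*k+3).choose k) := by
    have h := convPow_formula x u₁ hu₁x (k+1) k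
    rw [show k+1+1 = k+2 from rfl] at h
    rw [h, show 2*(k+1)+2 = 2*k+4 by omega, show k + 2*(k+1) + 1 = 3*k+3 by omega]
  have hsub : (k+2) - 2 = k := by omega
  have hpow : 2*(k+2) - 1 = 2*k+3 := by omega
  rw [hsub, hconv, hμ, hpow]
  push_cast
  rw [show (k:ℝ) + 2 - 1 = (k:ℝ) + 1 by ring]
  have hG1 : Gamma (3 * ((k:ℝ)+2) - 2) = ((3*k+3).factorial : ℝ) := by
    rw [show 3 * ((k:ℝ)+2) - 2 = ((3*k+3 : ℕ) : ℝ) + 1 by push_cast; ring]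
    exact Gamma_nat_eq_factorial _
  have hG2 : Gamma ((k:ℝ)+2) = (((k+1).factorial : ℕ) : ℝ) := by
    rw [show (k:ℝ)+2 = ((k+1 : ℕ) : ℝ) + 1 by push_cast; ring]
    exact Gamma_nat_eq_factorial _
  have hG3 : Gamma (2 * ((k:ℝ)+2)) = (((2*k+3).factorial : ℕ) : ℝ) := by
    rw [show 2 * ((k:ℝ)+2) = ((2*k+3 : ℕ) : ℝ) + 1 by push_cast; ring]
    exact Gamma_nat_eq_factorial _
  have hexp : exp (-lam * ((k:ℝ) + 1)) = x^(k+1) := by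
    rw [hxdef, ← Real.exp_nat_mul]
    congr 1
    push_cast
    ring
  rw [hG1, hG2, hG3, hexp]
  have hk1 : ((k:ℝ)+1) ≠ 0 := by positivity
  have h1xne : (1:ℝ) - x ≠ 0 := ne_of_gt hx1'
  have hch : (((3*k+3).choose k : ℕ) : ℝ) * ((k.factorial : ℝ) * ((2*k+3).factorial : ℝ))
      = ((3*k+3).factorial : ℝ) := by
    have h := Nat.choose_mul_factorial_mul_factorial (show k ≤ 3*k+3 by omega)
    have h2 : 3*k+3-k = 2*k+3 := by omega
    rw [h2] at h
    rw [← mul_assoc]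
    exact_mod_cast h
  have hfac : (((k+1).factorial : ℕ) : ℝ) = ((k:ℝ)+1) * (k.factorial : ℝ) := by
    rw [Nat.factorial_succ]; push_cast; ring
  have key : (((3*k+3).choose k : ℕ) : ℝ) * (((k+1).factorial : ℝ) * ((2*k+3).factorial : ℝ))
      = ((k:ℝ)+1) * ((3*k+3).factorial : ℝ) := by
    rw [hfac]
    linear_combination ((k:ℝ)+1) * hch
  have expand : x/(1-x)/((k:ℝ)+1) * ((1-x)^(2*k+4) * x^k * (((3*k+3).choose k : ℕ) : ℝ))
      = (1-x)^(2*k+3) * x^(k+1) * ((((3*k+3).choose k : ℕ) : ℝ)/((k:ℝ)+1)) := by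
    field_simp
    ring
  rw [expand,
    show (1-x)^(2*k+3) * x^(k+1) * ((3*k+3).factorial : ℝ) /
        (((k+1).factorial : ℝ) * ((2*k+3).factorial : ℝ))
      = (1-x)^(2*k+3) * x^(k+1) *
        (((3*k+3).factorial : ℝ) / (((k+1).factorial : ℝ) * ((2*k+3).factorial : ℝ))) from by
      ring]
  congr 1
  rw [div_eq_div_iff hk1 (by positivity)]
  linear_combination key
end

section
/- For n ≥ 2, the exact exponential-distribution component size formula w(n) = (1-e^{-λ})^{2n-1}·e^{-λ(n-1)}·Γ(3n-2)/(Γ(n)Γ(2n)) satisfies, when λ ≠ ln 3 and with C₂ = -ln(27·e^{-λ}·(1-e^{-λ})²/4) > 0, that w(n)·n^{3/2}·e^{C₂ n} converges to a positive constant as n → ∞. -/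
open Real Filter

section AuxStirling

open Stirling Nat

private lemma aux_stirlingSeq_pos {n : ℕ} (hn : 1 ≤ n) : 0 < stirlingSeq n := by
  obtain ⟨k, rfl⟩ := Nat.exists_eq_add_of_le hn
  simpa [Nat.add_comm] using stirlingSeq'_pos k

private lemma aux_fact_eq {n : ℕ} (hn : 1 ≤ n) :
    (n ! : ℝ) = stirlingSeq n * (Real.sqrt (2 * n) * ((n : ℝ) / Real.exp 1) ^ n) := by
  have hn0 : (0:ℝ) < n := by exact_mod_cast hn
  rw [stirlingSeq, div_mul_cancel₀]
  positivity

private lemma aux_ratio_eq (m : ℕ) (hm : 1 ≤ m) :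
    (((3 * m)! : ℝ)) / ((m ! : ℝ) * ((2 * m)! : ℝ)) =
      (stirlingSeq (3 * m) / (stirlingSeq m * stirlingSeq (2 * m))) *
        (Real.sqrt 3 / (2 * Real.sqrt m)) * (27 / 4) ^ m := by
  have hm0 : (0:ℝ) < m := by exact_mod_cast hm
  have hs1 : 0 < stirlingSeq m := aux_stirlingSeq_pos hm
  have hs2 : 0 < stirlingSeq (2 * m) := aux_stirlingSeq_pos (by omega)
  have hs3 : 0 < stirlingSeq (3 * m) := aux_stirlingSeq_pos (by omega)
  set E := Real.exp 1 with hE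
  have he : (0:ℝ) < E := Real.exp_pos 1
  have hpow : ((3 * (m:ℝ)) / E) ^ (3 * m) * 4 ^ m =
      27 ^ m * (((m:ℝ) / E) ^ m * ((2 * (m:ℝ)) / E) ^ (2 * m)) := by
    rw [pow_mul, pow_mul, ← mul_pow, ← mul_pow, ← mul_pow]
    congr 1
    field_simp
    ring
  have hsqrt : Real.sqrt (2 * (m:ℝ)) * Real.sqrt (2 * (2 * (m:ℝ))) * Real.sqrt 3 =
      Real.sqrt (2 * (3 * (m:ℝ))) * (2 * Real.sqrt m) := by
    rw [show (2 : ℝ) * Real.sqrt m = Real.sqrt 4 * Real.sqrt m by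
      rw [show (4:ℝ) = 2^2 by norm_num, Real.sqrt_sq (by norm_num)],
      ← Real.sqrt_mul (by positivity), ← Real.sqrt_mul (by positivity),
      ← Real.sqrt_mul (by positivity), ← Real.sqrt_mul (by positivity)]
    ring_nf
  have h1 : Real.sqrt (2 * (3 * (m:ℝ))) / (Real.sqrt (2 * (m:ℝ)) * Real.sqrt (2 * (2 * (m:ℝ))))
      = Real.sqrt 3 / (2 * Real.sqrt m) := by
    rw [div_eq_div_iff (by positivity) (by positivity)]
    linarith [hsqrt]
  have h2 : ((3 * (m:ℝ)) / E) ^ (3 * m) / ((((m:ℝ) / E) ^ m) * ((2 * (m:ℝ)) / E) ^ (2 * m))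
      = (27 / 4 : ℝ) ^ m := by
    rw [show ((27:ℝ)/4)^m = 27^m/4^m from div_pow 27 4 m,
      div_eq_div_iff (by positivity) (by positivity)]
    linarith [hpow]
  rw [aux_fact_eq (show 1 ≤ 3*m by omega), aux_fact_eq hm, aux_fact_eq (show 1 ≤ 2*m by omega)]
  push_cast
  calc stirlingSeq (3 * m) * (Real.sqrt (2 * (3 * (m:ℝ))) * ((3 * (m:ℝ)) / E) ^ (3 * m)) /
        (stirlingSeq m * (Real.sqrt (2 * (m:ℝ)) * (((m:ℝ)) / E) ^ m) *
          (stirlingSeq (2 * m) * (Real.sqrt (2 * (2 * (m:ℝ))) * ((2 * (m:ℝ)) / E) ^ (2 * m))))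
      = (stirlingSeq (3 * m) / (stirlingSeq m * stirlingSeq (2 * m))) *
        ((Real.sqrt (2 * (3 * (m:ℝ))) / (Real.sqrt (2 * (m:ℝ)) * Real.sqrt (2 * (2 * (m:ℝ))))) *
          (((3 * (m:ℝ)) / E) ^ (3 * m) / ((((m:ℝ) / E) ^ m) * ((2 * (m:ℝ)) / E) ^ (2 * m)))) := by
        field_simp
    _ = (stirlingSeq (3 * m) / (stirlingSeq m * stirlingSeq (2 * m))) *
        (Real.sqrt 3 / (2 * Real.sqrt m)) * (27 / 4) ^ m := by
        rw [h1, h2]; ring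

private lemma aux_tendsto_frac :
    Tendsto (fun m : ℕ => ((m:ℝ)+1)/(2*(m:ℝ)+1)) atTop (nhds ((1+0)/(2+0))) := by
  have hnum : Tendsto (fun m : ℕ => (1:ℝ) + 1/(m:ℝ)) atTop (nhds (1+0)) :=
    tendsto_const_nhds.add tendsto_one_div_atTop_nhds_zero_nat
  have hden : Tendsto (fun m : ℕ => (2:ℝ) + 1/(m:ℝ)) atTop (nhds (2+0)) :=
    tendsto_const_nhds.add tendsto_one_div_atTop_nhds_zero_nat
  have h := Tendsto.div hnum hden (by norm_num : (2:ℝ)+0 ≠ 0)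
  refine Tendsto.congr' ?_ h
  filter_upwards [eventually_ge_atTop 1] with m hm
  have hm0 : (0:ℝ) < m := by exact_mod_cast hm
  rw [Pi.div_apply]
  field_simp

private lemma aux_tendsto_sqrt :
    Tendsto (fun m : ℕ => Real.sqrt (((m:ℝ)+1)/(m:ℝ))) atTop (nhds 1) := by
  have hnum : Tendsto (fun m : ℕ => (1:ℝ) + 1/(m:ℝ)) atTop (nhds (1+0)) :=
    tendsto_const_nhds.add tendsto_one_div_atTop_nhds_zero_nat
  have h := Tendsto.sqrt hnum
  rw [show Real.sqrt (1+0) = 1 by norm_num] at h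
  refine Tendsto.congr' ?_ h
  filter_upwards [eventually_ge_atTop 1] with m hm
  have hm0 : (0:ℝ) < m := by exact_mod_cast hm
  rw [show ((m:ℝ)+1)/(m:ℝ) = 1 + 1/m by field_simp]

private lemma aux_tendsto_S :
    Tendsto (fun m : ℕ => stirlingSeq (3*m) / (stirlingSeq m * stirlingSeq (2*m))) atTop
      (nhds (Real.sqrt π / (Real.sqrt π * Real.sqrt π))) := by
  have hπ : 0 < Real.sqrt π := Real.sqrt_pos.mpr Real.pi_pos
  have h3 : Tendsto (fun m : ℕ => 3*m) atTop atTop :=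
    tendsto_atTop_atTop_of_monotone (fun a b h => by omega) (fun b => ⟨b, by omega⟩)
  have h2 : Tendsto (fun m : ℕ => 2*m) atTop atTop :=
    tendsto_atTop_atTop_of_monotone (fun a b h => by omega) (fun b => ⟨b, by omega⟩)
  exact Tendsto.div (tendsto_stirlingSeq_sqrt_pi.comp h3)
    ((tendsto_stirlingSeq_sqrt_pi).mul (tendsto_stirlingSeq_sqrt_pi.comp h2))
    (by positivity)

private lemma aux_alg (S F1 F2 sm s3 sm1 M a b : ℝ) (m : ℕ) (ha : a ≠ 0) (hb : b ≠ 0)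
    (hsm : sm ≠ 0) (hF1 : F1 ≠ 0) (hF2 : F2 ≠ 0) (hM : 2*M+1 ≠ 0) :
    a ^ (2*m+1) * b ^ m * (S * (s3/(2*sm)) * (27/4)^m * (F1*F2)) / (F1 * ((2*M+1) * F2)) *
      ((M+1) * sm1) * ((4/27)^(m+1) * (b⁻¹)^(m+1) * ((a^2)⁻¹)^(m+1)) =
    1/(a*b) * (4/27) * (s3/2) * (S * (sm1/sm * ((M+1)/(2*M+1)))) := by
  rw [div_pow, div_pow, inv_pow, inv_pow]
  field_simp
  ring

end AuxStirling

/-- Away from the critical point `λ = ln 3`, the exponential-distribution component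
size formula satisfies `w(n) ~ C₁·n^{-3/2}·e^{-C₂ n}` with
`C₂ = -ln(27 e^{-λ}(1-e^{-λ})²/4) > 0`: i.e. `w(n)·n^{3/2}·e^{C₂ n}` converges to a
positive constant. -/
theorem exponential_component_asymptote (lam : ℝ) (hlam : 0 < lam)
    (hne : lam ≠ Real.log 3)
    (w : ℕ → ℝ)
    (hw : ∀ n : ℕ, 2 ≤ n →
      w n = (1 - exp (-lam)) ^ (2 * n - 1) * exp (-lam * ((n : ℝ) - 1)) *
        Gamma (3 * n - 2) / (Gamma n * Gamma (2 * n)))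
    (C₂ : ℝ) (hC₂ : C₂ = -Real.log (27 * exp (-lam) * (1 - exp (-lam)) ^ 2 / 4)) :
    0 < C₂ ∧ ∃ C₁ : ℝ, 0 < C₁ ∧
      Tendsto (fun n : ℕ => w n * (n : ℝ) ^ ((3 : ℝ) / 2) * exp (C₂ * n))
        atTop (nhds C₁) := by
  open Stirling Nat in
  set b : ℝ := exp (-lam) with hb
  set a : ℝ := 1 - b with ha
  have hb0 : 0 < b := exp_pos _
  have hb1 : b < 1 := by
    rw [hb]
    exact exp_lt_one_iff.mpr (by linarith)
  have ha0 : 0 < a := by rw [ha]; linarith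
  have hbne : b ≠ 1/3 := by
    intro h
    apply hne
    have := congrArg Real.log h
    rw [hb, Real.log_exp, show (1:ℝ)/3 = 3⁻¹ by norm_num, Real.log_inv] at this
    linarith
  have hx0 : (0:ℝ) < 27 * b * a ^ 2 / 4 := by positivity
  have hx1 : 27 * b * a ^ 2 / 4 < 1 := by
    have h1 : (0:ℝ) < (3*b - 1)^2 := by
      have : 3*b - 1 ≠ 0 := fun h => hbne (by linarith)
      positivity
    have h2 : (0:ℝ) < 4 - 3*b := by linarith
    nlinarith [mul_pos h1 h2]
  have hC2pos : 0 < C₂ := by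
    rw [hC₂]
    have := Real.log_neg hx0 hx1
    linarith
  have hexpC2 : exp C₂ = 4 / (27 * b * a ^ 2) := by
    rw [hC₂, Real.exp_neg, Real.exp_log hx0, inv_div]
  refine ⟨hC2pos, ?_⟩
  have hπ : 0 < Real.sqrt π := Real.sqrt_pos.mpr Real.pi_pos
  set c : ℝ := 1/(a*b) * (4/27) * (Real.sqrt 3 / 2) with hc
  refine ⟨c * (Real.sqrt π / (Real.sqrt π * Real.sqrt π) * (1 * ((1+0)/(2+0)))), ?_, ?_⟩
  · have h3 : (0:ℝ) < Real.sqrt 3 := Real.sqrt_pos.mpr (by norm_num)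
    rw [hc]
    positivity
  · -- The limit of the auxiliary sequence
    have hF : Tendsto (fun m : ℕ =>
        c * ((stirlingSeq (3*m) / (stirlingSeq m * stirlingSeq (2*m))) *
          (Real.sqrt (((m:ℝ)+1)/(m:ℝ)) * (((m:ℝ)+1)/(2*(m:ℝ)+1))))) atTop
        (nhds (c * (Real.sqrt π / (Real.sqrt π * Real.sqrt π) * (1 * ((1+0)/(2+0)))))) :=
      tendsto_const_nhds.mul (aux_tendsto_S.mul (aux_tendsto_sqrt.mul aux_tendsto_frac))
    rw [← tendsto_add_atTop_iff_nat 1]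
    refine Tendsto.congr' ?_ hF
    filter_upwards [eventually_ge_atTop 1] with m hm
    have hm0 : (0:ℝ) < m := by exact_mod_cast hm
    -- Rewrite w (m+1)
    rw [hw (m+1) (by omega)]
    -- Gamma values at natural points
    have g3 : Gamma (3 * ((m+1:ℕ):ℝ) - 2) = ((3*m)! : ℝ) := by
      rw [show 3 * ((m+1:ℕ):ℝ) - 2 = ((3*m : ℕ):ℝ) + 1 by push_cast; ring,
        Real.Gamma_nat_eq_factorial]
    have g1 : Gamma (((m+1:ℕ):ℝ)) = (m ! : ℝ) := by
      rw [show ((m+1:ℕ):ℝ) = ((m:ℕ):ℝ) + 1 by push_cast; ring, Real.Gamma_nat_eq_factorial]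
    have g2 : Gamma (2 * ((m+1:ℕ):ℝ)) = (((2*m+1)!) : ℝ) := by
      rw [show 2 * ((m+1:ℕ):ℝ) = ((2*m+1 : ℕ):ℝ) + 1 by push_cast; ring,
        Real.Gamma_nat_eq_factorial]
    rw [g3, g1, g2]
    have e1 : (2*(m+1) - 1 : ℕ) = 2*m+1 := by omega
    have e2 : exp (-lam * (((m+1:ℕ):ℝ) - 1)) = b ^ m := by
      rw [show -lam * (((m+1:ℕ):ℝ) - 1) = (m:ℕ) * (-lam) by push_cast; ring,
        Real.exp_nat_mul]
    have e3 : exp (C₂ * ((m+1:ℕ):ℝ)) = (4 / (27 * b * a ^ 2)) ^ (m+1) := by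
      rw [show C₂ * ((m+1:ℕ):ℝ) = ((m+1:ℕ):ℝ) * C₂ by ring, Real.exp_nat_mul, hexpC2]
    have e4 : ((m+1:ℕ):ℝ) ^ ((3:ℝ)/2) = ((m:ℝ)+1) * Real.sqrt ((m:ℝ)+1) := by
      rw [show ((m+1:ℕ):ℝ) = (m:ℝ)+1 by push_cast; ring,
        show (3:ℝ)/2 = 1 + 1/2 by norm_num,
        Real.rpow_add (by positivity), Real.rpow_one, ← Real.sqrt_eq_rpow]
    rw [e1, e2, e3, e4]
    -- factorial identities
    have hf21 : (((2*m+1)!) : ℝ) = ((2*m:ℕ)+1 : ℝ) * ((2*m)! : ℝ) := by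
      rw [show (2*m+1)! = (2*m+1) * (2*m)! from Nat.factorial_succ (2*m)]
      push_cast
      ring
    have hfact3 : ((3*m)! : ℝ) =
        (stirlingSeq (3*m) / (stirlingSeq m * stirlingSeq (2*m))) *
          (Real.sqrt 3 / (2 * Real.sqrt m)) * (27/4)^m * ((m ! : ℝ) * ((2*m)! : ℝ)) := by
      rw [← aux_ratio_eq m hm]
      field_simp
    rw [hfact3, hf21]
    -- remaining pure algebra
    have hk : ((4:ℝ) / (27 * b * a ^ 2)) ^ (m+1)
        = (4/27 : ℝ)^(m+1) * (b⁻¹)^(m+1) * ((a^2)⁻¹)^(m+1) := by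
      rw [← mul_pow, ← mul_pow]
      congr 1
      field_simp
    rw [hk]
    have hsm : Real.sqrt (((m:ℝ)+1)/(m:ℝ)) = Real.sqrt ((m:ℝ)+1) / Real.sqrt m :=
      Real.sqrt_div (by positivity) _
    rw [hsm]
    have hm' : (0:ℝ) < Real.sqrt m := Real.sqrt_pos.mpr hm0
    have hfm : (0:ℝ) < (m ! : ℝ) := by exact_mod_cast Nat.factorial_pos m
    have hfm2 : (0:ℝ) < ((2*m)! : ℝ) := by exact_mod_cast Nat.factorial_pos (2*m)
    have h2m1 : (0:ℝ) < 2*(m:ℝ)+1 := by linarith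
    rw [hc]
    push_cast
    exact (aux_alg (stirlingSeq (3*m) / (stirlingSeq m * stirlingSeq (2*m)))
      (m ! : ℝ) ((2*m)! : ℝ) (Real.sqrt m) (Real.sqrt 3) (Real.sqrt ((m:ℝ)+1)) (m:ℝ)
      a b m ha0.ne' hb0.ne' hm'.ne' hfm.ne' hfm2.ne' h2m1.ne').symm
end
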